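/- arXiv:1401.2343 — 4 statements merged into one kernel-verified Lean document; each statement's English description precedes it below -/
import Mathlib

section
/- Let φ : [0,1] → [0,1] be a continuous map with φ(0)=0, φ(1)=1 and φ(t) < t for all t ∈ (0,1), and let R be a dense subset of (0,1). Then there exists a two-sided sequence (z_m)_{m∈ℤ} of points of R such that for every m ∈ ℤ one has φ(z_m) < z_{m-1} < z_m, lim_{m→-∞} z_m = 0, and lim_{m→∞} z_m = 1. -/
open Set Filter

theorem stmt_1 (φ : ℝ → ℝ) (R : Set ℝ)
    (hcont : ContinuousOn φ (Icc 0 1))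
    (hmaps : MapsTo φ (Icc 0 1) (Icc 0 1))
    (h0 : φ 0 = 0) (h1 : φ 1 = 1)
    (hlt : ∀ t ∈ Ioo (0:ℝ) 1, φ t < t)
    (hR : R ⊆ Ioo 0 1) (hRdense : Ioo (0:ℝ) 1 ⊆ closure R) :
    ∃ z : ℤ → ℝ, (∀ m, z m ∈ R) ∧
      (∀ m : ℤ, φ (z m) < z (m - 1) ∧ z (m - 1) < z m) ∧
      Tendsto z atBot (nhds 0) ∧ Tendsto z atTop (nhds 1) := by
  classical
  -- continuity at interior points
  have hc : ∀ x ∈ Ioo (0:ℝ) 1, ContinuousAt φ x := by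
    intro x hx
    exact hcont.continuousAt (Icc_mem_nhds hx.1 hx.2)
  have hφ0 : ∀ x ∈ Ioo (0:ℝ) 1, 0 ≤ φ x := fun x hx => (hmaps ⟨hx.1.le, hx.2.le⟩).1
  set σ : ℝ → ℝ := fun x => sSup {t | t ∈ Ioo x 1 ∧ φ t < x} with hσ
  -- forward step
  have hfwd : ∀ x, ∃ y, x ∈ Ioo (0:ℝ) 1 →
      y ∈ R ∧ x < y ∧ φ y < x ∧ (x + σ x)/2 < y := by
    intro x
    by_cases hx : x ∈ Ioo (0:ℝ) 1
    swap
    · exact ⟨0, fun h => absurd h hx⟩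
    set A : Set ℝ := {t | t ∈ Ioo x 1 ∧ φ t < x} with hA
    have hbddA : BddAbove A := ⟨1, fun t ht => ht.1.2.le⟩
    have hAne : A.Nonempty := by
      have h1 : ∀ᶠ t in nhds x, φ t < x :=
        (hc x hx).eventually_lt_const (hlt x hx)
      have h2 : ∀ᶠ t in nhds x, t < 1 := eventually_lt_nhds hx.2
      have h3 : ∀ᶠ t in nhdsWithin x (Ioi x), φ t < x ∧ t < 1 :=
        ((h1.and h2).filter_mono nhdsWithin_le_nhds)
      have h4 : ∀ᶠ t in nhdsWithin x (Ioi x), x < t := eventually_mem_nhdsWithin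
      obtain ⟨t, ht1, ht2⟩ := (h3.and h4).exists
      exact ⟨t, ⟨ht2, ht1.2⟩, ht1.1⟩
    have hσx : x < σ x := by
      obtain ⟨t, htA⟩ := hAne
      exact lt_of_lt_of_le htA.1.1 (le_csSup hbddA htA)
    obtain ⟨t', ht'A, ht'⟩ : ∃ t' ∈ A, (x + σ x)/2 < t' := by
      apply exists_lt_of_lt_csSup hAne
      linarith
    have ht'01 : t' ∈ Ioo (0:ℝ) 1 := ⟨hx.1.trans ht'A.1.1, ht'A.1.2⟩
    have hU : {s | φ s < x ∧ (x + σ x)/2 < s ∧ s < 1 ∧ x < s} ∈ nhds t' := by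
      have e1 : ∀ᶠ s in nhds t', φ s < x :=
        (hc t' ht'01).eventually_lt_const ht'A.2
      have e2 : ∀ᶠ s in nhds t', (x + σ x)/2 < s := eventually_gt_nhds ht'
      have e3 : ∀ᶠ s in nhds t', s < 1 := eventually_lt_nhds ht'01.2
      have e4 : ∀ᶠ s in nhds t', x < s := eventually_gt_nhds ht'A.1.1
      filter_upwards [e1, e2, e3, e4] with s h1 h2 h3 h4
      exact ⟨h1, h2, h3, h4⟩
    obtain ⟨y, hyU, hyR⟩ := mem_closure_iff_nhds.mp (hRdense ht'01) _ hU
    exact ⟨y, fun _ => ⟨hyR, hyU.2.2.2, hyU.1, hyU.2.1⟩⟩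
  choose F hF using hfwd
  -- backward step
  have hbwd : ∀ x, ∃ y, x ∈ Ioo (0:ℝ) 1 →
      y ∈ R ∧ φ x < y ∧ y < (φ x + x)/2 := by
    intro x
    by_cases hx : x ∈ Ioo (0:ℝ) 1
    swap
    · exact ⟨0, fun h => absurd h hx⟩
    have h0x : 0 ≤ φ x := hφ0 x hx
    have hφx : φ x < x := hlt x hx
    set p : ℝ := (3 * φ x + x)/4 with hp
    have hp1 : φ x < p := by rw [hp]; linarith
    have hp2 : p < (φ x + x)/2 := by rw [hp]; linarith
    have hp01 : p ∈ Ioo (0:ℝ) 1 := by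
      constructor
      · linarith
      · have : p < x := by rw [hp]; linarith
        linarith [hx.2]
    have hU : Ioo (φ x) ((φ x + x)/2) ∈ nhds p :=
      isOpen_Ioo.mem_nhds ⟨hp1, hp2⟩
    obtain ⟨y, hyU, hyR⟩ := mem_closure_iff_nhds.mp (hRdense hp01) _ hU
    exact ⟨y, fun _ => ⟨hyR, hyU.1, hyU.2⟩⟩
  choose B hB using hbwd
  -- initial point
  obtain ⟨z₀, hz₀R⟩ : R.Nonempty := by
    have : (1/2 : ℝ) ∈ closure R := hRdense (by norm_num)
    rcases R.eq_empty_or_nonempty with h | h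
    · rw [h, closure_empty] at this; exact absurd this (notMem_empty _)
    · exact h
  have hz₀ : z₀ ∈ Ioo (0:ℝ) 1 := hR hz₀R
  -- forward sequence
  set u : ℕ → ℝ := fun n => F^[n] z₀ with hu
  have huR : ∀ n, u n ∈ R := by
    intro n
    induction n with
    | zero => simpa [hu] using hz₀R
    | succ n ih =>
        have : u (n+1) = F (u n) := Function.iterate_succ_apply' F n z₀
        rw [this]
        exact (hF (u n) (hR ih)).1
  have hu01 : ∀ n, u n ∈ Ioo (0:ℝ) 1 := fun n => hR (huR n)
  have huS : ∀ n, u n < u (n+1) ∧ φ (u (n+1)) < u n ∧ (u n + σ (u n))/2 < u (n+1) := by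
    intro n
    have e : u (n+1) = F (u n) := Function.iterate_succ_apply' F n z₀
    rw [e]
    exact ⟨(hF (u n) (hu01 n)).2.1, (hF (u n) (hu01 n)).2.2.1, (hF (u n) (hu01 n)).2.2.2⟩
  have humono : StrictMono u := strictMono_nat_of_lt_succ fun n => (huS n).1
  have hubdd : BddAbove (range u) := ⟨1, by rintro _ ⟨n, rfl⟩; exact (hu01 n).2.le⟩
  set L : ℝ := ⨆ n, u n with hL
  have huL : Tendsto u atTop (nhds L) := tendsto_atTop_ciSup humono.monotone hubdd
  have huleL : ∀ n, u n ≤ L := fun n => le_ciSup hubdd n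
  have hL1 : L ≤ 1 := ciSup_le fun n => (hu01 n).2.le
  have hL0 : 0 < L := lt_of_lt_of_le (hu01 0).1 (huleL 0)
  have hLeq : L = 1 := by
    by_contra hne
    have hL01 : L ∈ Ioo (0:ℝ) 1 := ⟨hL0, lt_of_le_of_ne hL1 hne⟩
    have hφL : φ L < L := hlt L hL01
    set c : ℝ := (φ L + L)/2 with hcdef
    have hcL : c < L := by rw [hcdef]; linarith
    have hV : ∀ᶠ t in nhds L, φ t < c :=
      (hc L hL01).eventually_lt_const (by rw [hcdef]; linarith)
    obtain ⟨δ, hδpos, hδ⟩ := Metric.eventually_nhds_iff.mp hV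
    set δ' : ℝ := min δ (1 - L) with hδ'
    have hδ'pos : 0 < δ' := lt_min hδpos (by linarith [hL01.2])
    set t₀ : ℝ := L + δ'/2 with ht₀
    have ht₀1 : t₀ < 1 := by
      have : δ' ≤ 1 - L := min_le_right _ _
      rw [ht₀]; linarith
    have ht₀φ : φ t₀ < c := by
      apply hδ
      have : δ' ≤ δ := min_le_left _ _
      rw [ht₀]
      simp only [Real.dist_eq]
      rw [abs_of_nonneg (by linarith)]
      linarith
    -- find m with u m > max c (L - δ'/8)
    have hev : ∀ᶠ m in atTop, max c (L - δ'/8) < u m :=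
      huL.eventually_const_lt (max_lt hcL (by linarith))
    obtain ⟨m, hm⟩ := hev.exists
    have hmc : c < u m := lt_of_le_of_lt (le_max_left _ _) hm
    have hmδ : L - δ'/8 < u m := lt_of_le_of_lt (le_max_right _ _) hm
    have humL : u m < L := lt_of_lt_of_le (huS m).1 (huleL (m+1))
    have ht₀A : t₀ ∈ {t | t ∈ Ioo (u m) 1 ∧ φ t < u m} := by
      refine ⟨⟨?_, ht₀1⟩, lt_trans ht₀φ hmc⟩
      rw [ht₀]; linarith
    have hσm : t₀ ≤ σ (u m) :=
      le_csSup ⟨1, fun t ht => ht.1.2.le⟩ ht₀A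
    clear_value σ u L c δ' t₀
    have hstep := (huS m).2.2
    have h2 : u (m+1) ≤ L := huleL (m+1)
    have hhalf : (u m + t₀)/2 ≤ (u m + σ (u m))/2 := by linarith
    have hkey : (u m + t₀)/2 < L := by linarith
    rw [ht₀] at hkey
    linarith
  -- backward sequence
  set d : ℕ → ℝ := fun n => B^[n] z₀ with hd
  have hdR : ∀ n, d n ∈ R := by
    intro n
    induction n with
    | zero => simpa [hd] using hz₀R
    | succ n ih =>
        have : d (n+1) = B (d n) := Function.iterate_succ_apply' B n z₀
        rw [this]
        exact (hB (d n) (hR ih)).1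
  have hd01 : ∀ n, d n ∈ Ioo (0:ℝ) 1 := fun n => hR (hdR n)
  have hdS : ∀ n, φ (d n) < d (n+1) ∧ d (n+1) < (φ (d n) + d n)/2 := by
    intro n
    have e : d (n+1) = B (d n) := Function.iterate_succ_apply' B n z₀
    rw [e]
    exact ⟨(hB (d n) (hd01 n)).2.1, (hB (d n) (hd01 n)).2.2⟩
  have hdanti : StrictAnti d := strictAnti_nat_of_succ_lt fun n => by
    have h1 := (hdS n).2
    have h2 := hlt (d n) (hd01 n)
    linarith
  have hdbdd : BddBelow (range d) := ⟨0, by rintro _ ⟨n, rfl⟩; exact (hd01 n).1.le⟩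
  set M : ℝ := ⨅ n, d n with hM
  have hdM : Tendsto d atTop (nhds M) := tendsto_atTop_ciInf hdanti.antitone hdbdd
  have hM0 : 0 ≤ M := le_ciInf fun n => (hd01 n).1.le
  have hM1 : M < 1 := lt_of_le_of_lt (ciInf_le hdbdd 0) (hd01 0).2
  have hMeq : M = 0 := by
    by_contra hne
    have hM01 : M ∈ Ioo (0:ℝ) 1 := ⟨lt_of_le_of_ne hM0 (Ne.symm hne), hM1⟩
    have hφM : Tendsto (fun n => φ (d n)) atTop (nhds (φ M)) :=
      ((hc M hM01).tendsto).comp hdM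
    have h1 : Tendsto (fun n => d (n+1)) atTop (nhds M) :=
      hdM.comp (tendsto_add_atTop_nat 1)
    have h2 : Tendsto (fun n => (φ (d n) + d n)/2) atTop (nhds ((φ M + M)/2)) := by
      exact (hφM.add hdM).div_const 2
    have h3 : M ≤ (φ M + M)/2 :=
      le_of_tendsto_of_tendsto' h1 h2 fun n => (hdS n).2.le
    have := hlt M hM01
    linarith
  -- glue
  refine ⟨fun m => if 0 ≤ m then u m.toNat else d (-m).toNat, ?_, ?_, ?_, ?_⟩
  · intro m
    by_cases hm : 0 ≤ m
    · simp only [hm, if_pos]; exact huR _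
    · simp only [hm, if_neg, not_false_iff]; exact hdR _
  · intro m
    by_cases hm : 1 ≤ m
    · have hm0 : 0 ≤ m := by omega
      have hm1 : 0 ≤ m - 1 := by omega
      simp only [hm0, hm1, if_pos]
      have e : m.toNat = (m-1).toNat + 1 := by omega
      rw [e]
      exact ⟨(huS _).2.1, (huS _).1⟩
    · have hm1 : ¬ 0 ≤ m - 1 := by omega
      have e : (-(m-1)).toNat = (-m).toNat + 1 := by omega
      simp only [hm1, if_neg, not_false_iff, e]
      by_cases hm0 : 0 ≤ m
      · have hmz : m = 0 := by omega
        subst hmz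
        simp only [le_refl, if_pos]
        have e0 : u 0 = d 0 := by simp [hu, hd]
        rw [show ((-(0:ℤ)).toNat) = 0 by omega, show ((0:ℤ).toNat) = 0 from rfl, e0]
        refine ⟨(hdS 0).1, ?_⟩
        have h1 := (hdS 0).2
        have h2 := hlt (d 0) (hd01 0)
        linarith
      · simp only [hm0, if_neg, not_false_iff]
        refine ⟨(hdS _).1, ?_⟩
        have h1 := (hdS ((-m).toNat)).2
        have h2 := hlt (d ((-m).toNat)) (hd01 _)
        linarith
  · -- atBot
    rw [← hMeq]
    have htn : Tendsto (fun m : ℤ => (-m).toNat) atBot atTop := by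
      apply tendsto_atTop.mpr
      intro b
      rw [eventually_atBot]
      exact ⟨-(b:ℤ), fun a ha => by omega⟩
    have := hdM.comp htn
    apply this.congr'
    rw [EventuallyEq, eventually_atBot]
    refine ⟨-1, fun m hm => ?_⟩
    have : ¬ 0 ≤ m := by omega
    simp [this]
  · -- atTop
    rw [← hLeq]
    have htn : Tendsto (fun m : ℤ => m.toNat) atTop atTop := by
      apply tendsto_atTop.mpr
      intro b
      rw [eventually_atTop]
      exact ⟨(b:ℤ), fun a ha => by omega⟩
    have := huL.comp htn
    apply this.congr'
    rw [EventuallyEq, eventually_atTop]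
    exact ⟨0, fun m hm => by simp [hm]⟩
end

section
/- Define φ : [0,1] → [0,1] by φ(t) = t/2 for t ≤ 2/3 and φ(t) = 2t−1 for t ≥ 2/3. Then φ is an increasing homeomorphism of [0,1], φ(t) < t for every t ∈ (0,1), and φ maps Q_c onto Q_{c+1 mod 2} for each c ∈ {0,1}, where Q_c is the set of dyadic rationals p/2^q in (0,1) (p odd) with q ≡ c (mod 2). -/
open Set

def dyadicClass (c : ℕ) : Set ℝ :=
  {x : ℝ | ∃ p q : ℕ, 1 ≤ q ∧ Odd p ∧ 1 ≤ p ∧ p < 2 ^ q ∧ q % 2 = c ∧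
    x = (p : ℝ) / 2 ^ q}

noncomputable def phiMap : ℝ → ℝ := fun t => if t ≤ 2 / 3 then t / 2 else 2 * t - 1

lemma phiMap_continuous : Continuous phiMap := by
  unfold phiMap
  apply Continuous.if_le (by continuity) (by continuity) continuous_id continuous_const
  intro x hx; simp only [id] at hx; subst hx; norm_num

lemma phiMap_strictMono : StrictMono phiMap := by
  intro x y hxy
  unfold phiMap
  split_ifs with hx hy hy
  · linarith
  · push_neg at hy; linarith
  · push_neg at hx; linarith
  · linarith

lemma phiMap_zero : phiMap 0 = 0 := by unfold phiMap; norm_num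

lemma phiMap_one : phiMap 1 = 1 := by unfold phiMap; norm_num

lemma phi_forward (c : ℕ) (hc : c ≤ 1) :
    phiMap '' dyadicClass c ⊆ dyadicClass ((c + 1) % 2) := by
  rintro _ ⟨x, ⟨p, q, hq, hpodd, hp1, hplt, hqc, rfl⟩, rfl⟩
  by_cases hle : (p : ℝ) / 2 ^ q ≤ 2 / 3
  · refine ⟨p, q + 1, by omega, hpodd, hp1, ?_, by omega, ?_⟩
    · calc p < 2 ^ q := hplt
        _ ≤ 2 ^ (q + 1) := Nat.pow_le_pow_right (by norm_num) (Nat.le_succ q)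
    · rw [phiMap]; simp only [if_pos hle]; rw [pow_succ]; ring
  · -- here p/2^q > 2/3, so 2^q < ... and q ≥ 2
    have h2q : (0:ℝ) < 2 ^ q := by positivity
    have hgt : (2:ℝ) / 3 < (p : ℝ) / 2 ^ q := lt_of_not_ge hle
    have h3p : 2 ^ (q + 1) < 3 * p := by
      rw [div_lt_div_iff₀ (by norm_num) h2q] at hgt
      have : (2:ℝ) ^ (q+1) < 3 * p := by rw [pow_succ]; linarith
      exact_mod_cast this
    have hq2 : 2 ≤ q := by
      by_contra h
      have hq1 : q = 1 := by omega
      subst hq1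
      have : p = 1 := by omega
      omega
    obtain ⟨q', rfl⟩ : ∃ q', q = q' + 1 := ⟨q - 1, by omega⟩
    have hq' : 1 ≤ q' := by omega
    have hpow : (2:ℕ) ^ (q' + 1) = 2 * 2 ^ q' := by rw [pow_succ]; ring
    have hpow2 : (2:ℕ) ^ (q' + 2) = 4 * 2 ^ q' := by rw [pow_add]; ring
    have hpg : 2 ^ q' < p := by omega
    have heven : Even ((2:ℕ) ^ q') := (Nat.even_pow).2 ⟨even_two, by omega⟩
    refine ⟨p - 2 ^ q', q', hq', Nat.Odd.sub_even hpg.le hpodd heven, by omega, by omega,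
      by omega, ?_⟩
    rw [phiMap]; simp only [if_neg hle]
    rw [Nat.cast_sub hpg.le]
    push_cast
    have h2q' : (2:ℝ) ^ q' ≠ 0 := by positivity
    field_simp
    rw [pow_succ]; ring

lemma phi_backward (c : ℕ) (hc : c ≤ 1) :
    dyadicClass ((c + 1) % 2) ⊆ phiMap '' dyadicClass c := by
  rintro _ ⟨p, q, hq, hpodd, hp1, hplt, hqc, rfl⟩
  have hne : 3 * p ≠ 2 ^ q := by
    intro h
    have hdvd : 3 ∣ 2 ^ q := ⟨p, h.symm⟩
    have := Nat.Prime.dvd_of_dvd_pow Nat.prime_three hdvd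
    norm_num at this
  by_cases hlt : 3 * p < 2 ^ q
  · -- y < 1/3, preimage is p / 2^(q-1)
    have hq2 : 2 ≤ q := by
      by_contra h
      have : q = 1 := by omega
      subst this
      omega
    obtain ⟨q', rfl⟩ : ∃ q', q = q' + 1 := ⟨q - 1, by omega⟩
    have hpow : (2:ℕ) ^ (q' + 1) = 2 * 2 ^ q' := by rw [pow_succ]; ring
    refine ⟨(p : ℝ) / 2 ^ q', ⟨p, q', by omega, hpodd, hp1, by omega, by omega, rfl⟩, ?_⟩
    have hle : (p : ℝ) / 2 ^ q' ≤ 2 / 3 := by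
      rw [div_le_div_iff₀ (by positivity) (by norm_num)]
      have h1 : (3 * p : ℕ) ≤ 2 * 2 ^ q' := by omega
      have : ((3 * p : ℕ) : ℝ) ≤ ((2 * 2 ^ q' : ℕ) : ℝ) := Nat.cast_le.2 h1
      push_cast at this
      linarith
    rw [phiMap]; simp only [if_pos hle]
    rw [pow_succ]; ring
  · -- y > 1/3, preimage is (p + 2^q) / 2^(q+1)
    have hgt : 2 ^ q < 3 * p := by omega
    have heven : Even ((2:ℕ) ^ q) := (Nat.even_pow).2 ⟨even_two, by omega⟩
    have hpow : (2:ℕ) ^ (q + 1) = 2 * 2 ^ q := by rw [pow_succ]; ring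
    refine ⟨((p : ℝ) + 2 ^ q) / 2 ^ (q + 1),
      ⟨p + 2 ^ q, q + 1, by omega, Odd.add_even hpodd heven, by omega, by omega, by omega,
        by push_cast; ring⟩, ?_⟩
    have hnle : ¬ ((p : ℝ) + 2 ^ q) / 2 ^ (q + 1) ≤ 2 / 3 := by
      rw [not_le, div_lt_div_iff₀ (by norm_num) (by positivity)]
      have : ((2 ^ q : ℕ) : ℝ) < ((3 * p : ℕ) : ℝ) := Nat.cast_lt.2 hgt
      push_cast at this
      rw [pow_succ]
      ring_nf
      nlinarith [pow_pos (show (0:ℝ) < 2 by norm_num) q]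
    rw [phiMap]; simp only [if_neg hnle]
    have h2q : (2:ℝ) ^ q ≠ 0 := by positivity
    field_simp
    rw [pow_succ]; ring

theorem stmt_6 :
    ContinuousOn phiMap (Icc 0 1) ∧
    StrictMonoOn phiMap (Icc 0 1) ∧
    phiMap '' Icc 0 1 = Icc 0 1 ∧
    (∀ t ∈ Ioo (0:ℝ) 1, phiMap t < t) ∧
    (∀ c : ℕ, c ≤ 1 → phiMap '' dyadicClass c = dyadicClass ((c + 1) % 2)) := by
  refine ⟨phiMap_continuous.continuousOn, phiMap_strictMono.strictMonoOn _, ?_, ?_, ?_⟩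
  · apply Subset.antisymm
    · rintro _ ⟨x, hx, rfl⟩
      constructor
      · have := phiMap_strictMono.monotone hx.1
        rwa [phiMap_zero] at this
      · have := phiMap_strictMono.monotone hx.2
        rwa [phiMap_one] at this
    · have := intermediate_value_Icc (show (0:ℝ) ≤ 1 by norm_num)
        phiMap_continuous.continuousOn
      rwa [phiMap_zero, phiMap_one] at this
  · intro t ht
    unfold phiMap
    split_ifs with h
    · linarith [ht.1]
    · linarith [ht.2]
  · intro c hc
    exact Subset.antisymm (phi_forward c hc) (phi_backward c hc)
end

section
/- Let X be a compact metric space, f : X → X continuous, and D = (D_0, …, D_{m−1}) a regular periodic decomposition for f (i.e., each D_i is the closure of its interior, the D_i cover X, f(D_i) ⊆ D_{i+1 mod m}, and D_i ∩ D_j is nowhere dense for i ≠ j). If x ∈ X is a periodic point of f lying in the interior of D_i for some i, then the period of x is divisible by m. -/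
open Set Function

theorem stmt_8 {X : Type*} [MetricSpace X] [CompactSpace X]
    (f : X → X) (hf : Continuous f)
    (m : ℕ) (hm : 0 < m) (D : ZMod m → Set X)
    (hreg : ∀ i, closure (interior (D i)) = D i)
    (hcover : (⋃ i, D i) = univ)
    (hcyc : ∀ i, f '' D i ⊆ D (i + 1))
    (hnwd : ∀ i j, i ≠ j → IsNowhereDense (D i ∩ D j))
    (x : X) (hx : x ∈ Function.periodicPts f) (i : ZMod m) (hxi : x ∈ interior (D i)) :
    m ∣ Function.minimalPeriod f x := by
  have key : ∀ n : ℕ, ∀ y, y ∈ D i → f^[n] y ∈ D (i + n) := by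
    intro n
    induction n with
    | zero => simpa using fun y hy => hy
    | succ n ih =>
      intro y hy
      have := hcyc (i + n) ⟨f^[n] y, ih y hy, rfl⟩
      rw [Function.iterate_succ_apply']
      convert this using 2
      push_cast
      ring
  set n := Function.minimalPeriod f x with hn
  have hnpos : 0 < n := Function.minimalPeriod_pos_of_mem_periodicPts hx
  have hfix : f^[n] x = x := Function.iterate_minimalPeriod
  have hxDi : x ∈ D i := interior_subset hxi
  have hxn : x ∈ D (i + n) := by
    have := key n x hxDi
    rwa [hfix] at this
  -- show i + n = i
  have heq : i + (n : ZMod m) = i := by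
    by_contra hne
    have hne' : i ≠ i + (n : ZMod m) := fun h => hne h.symm
    have hnw := hnwd i (i + n) hne'
    -- x ∈ interior (D i) and x ∈ D (i+n) = closure (interior (D (i+n)))
    have hxcl : x ∈ closure (interior (D (i + n))) := by rw [hreg]; exact hxn
    have : (interior (D i) ∩ interior (D (i + n))).Nonempty := by
      rcases mem_closure_iff.mp hxcl (interior (D i)) isOpen_interior hxi with ⟨y, hy1, hy2⟩
      exact ⟨y, hy1, hy2⟩
    rcases this with ⟨y, hy1, hy2⟩
    have hsub : interior (D i) ∩ interior (D (i + n)) ⊆ closure (D i ∩ D (i + n)) :=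
      fun z hz => subset_closure ⟨interior_subset hz.1, interior_subset hz.2⟩
    have : y ∈ interior (closure (D i ∩ D (i + n))) :=
      interior_maximal hsub ((isOpen_interior.inter isOpen_interior)) ⟨hy1, hy2⟩
    rw [hnw] at this
    exact this
  have : (n : ZMod m) = 0 := by
    have := congrArg (fun z => z - i) heq
    simpa using this
  exact (ZMod.natCast_eq_zero_iff n m).mp this
end

section
/- Let (λ_α)_{α ∈ A} be a family of positive reals indexed by a countable set A, let ρ : A → A be a finite-to-one map, and suppose there are constants L_m > 1 (depending on a 'level' function ℓ : A → ℕ with ℓ(ρ(α)) ≤ ℓ(α)) such that: (i) for every m, λ_α ≤ ∏_{2 ≤ k ≤ m} L_k^{−1} whenever ℓ(α) = m; and (ii) the set of α with ℓ(α) ≤ 1 and λ_α > ε is finite for every ε > 0; and (iii) for every α with ℓ(α) = m ≥ 2 there is p = p_α ≥ 1 with ℓ(ρ^{p}(α)) < m, λ_α = λ_{ρ^p(α)}·L_m^{−p}. If ∏_{2≤k≤m} L_k^{-1} → 0 as m → ∞, then the family (λ_α) is null: for every ε > 0 only finitely many α satisfy λ_α > ε. -/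
open Set Filter

lemma fto_pre {A : Type*} {f : A → A} (hf : ∀ b, {a | f a = b}.Finite)
    {S : Set A} (hS : S.Finite) : (f ⁻¹' S).Finite := by
  have h : f ⁻¹' S = ⋃ b ∈ S, {a | f a = b} := by
    ext a
    simp only [Set.mem_preimage, Set.mem_iUnion, Set.mem_setOf_eq]
    exact ⟨fun h => ⟨f a, h, rfl⟩, fun ⟨b, hb, e⟩ => e ▸ hb⟩
  rw [h]
  exact hS.biUnion fun b _ => hf b

lemma fto_iter {A : Type*} {f : A → A} (hf : ∀ b, {a | f a = b}.Finite)
    (p : ℕ) {S : Set A} (hS : S.Finite) : (f^[p] ⁻¹' S).Finite := by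
  induction p generalizing S with
  | zero => simpa using hS
  | succ n ih =>
    rw [Function.iterate_succ, Set.preimage_comp]
    exact fto_pre hf (ih hS)

theorem stmt_14 {A : Type*} [Countable A]
    (lam : A → ℝ) (hpos : ∀ a, 0 < lam a)
    (ρ : A → A) (hfto : ∀ b : A, {a : A | ρ a = b}.Finite)
    (ℓ : A → ℕ) (hℓρ : ∀ a, ℓ (ρ a) ≤ ℓ a)
    (L : ℕ → ℝ) (hL : ∀ m, 1 < L m)
    (hbound : ∀ a : A, lam a ≤ ∏ k ∈ Finset.Icc 2 (ℓ a), (L k)⁻¹)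
    (hlow : ∀ ε : ℝ, 0 < ε → {a : A | ℓ a ≤ 1 ∧ ε < lam a}.Finite)
    (hrec : ∀ a : A, 2 ≤ ℓ a → ∃ p : ℕ, 1 ≤ p ∧ ℓ (ρ^[p] a) < ℓ a ∧
      lam a = lam (ρ^[p] a) / (L (ℓ a)) ^ p)
    (hprod : Tendsto (fun m : ℕ => ∏ k ∈ Finset.Icc 2 m, (L k)⁻¹) atTop (nhds 0)) :
    ∀ ε : ℝ, 0 < ε → {a : A | ε < lam a}.Finite := by
  intro ε hε
  have hprod1 : ∀ m, ∏ k ∈ Finset.Icc 2 m, (L k)⁻¹ ≤ 1 := by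
    intro m
    refine Finset.prod_le_one (fun k _ => inv_nonneg.mpr (lt_trans one_pos (hL k)).le) (fun k _ => ?_)
    exact inv_le_one_of_one_le₀ (hL k).le
  have key : ∀ m, {a : A | ℓ a = m ∧ ε < lam a}.Finite := by
    intro m
    induction m using Nat.strong_induction_on with
    | _ m ih =>
      rcases le_or_gt m 1 with hm | hm
      · exact (hlow ε hε).subset (fun a ⟨h1, h2⟩ => ⟨h1 ▸ hm, h2⟩)
      · have hT' : {a : A | ℓ a < m ∧ ε < lam a}.Finite := by
          have hfin : (⋃ m' ∈ Finset.range m, {a : A | ℓ a = m' ∧ ε < lam a}).Finite :=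
            Set.Finite.biUnion (Finset.range m).finite_toSet
              (fun m' hm' => ih m' (Finset.mem_range.mp hm'))
          refine hfin.subset (fun a ⟨h1, h2⟩ => ?_)
          exact Set.mem_biUnion (Finset.mem_range.mpr h1) ⟨rfl, h2⟩
        have hLm : (1:ℝ) < L m := hL m
        obtain ⟨P, hP⟩ : ∃ P : ℕ, ∀ p ≥ P, 1/ε < L m ^ p := by
          have := (tendsto_pow_atTop_atTop_of_one_lt hLm).eventually_gt_atTop (1/ε)
          exact eventually_atTop.mp this
        have hsub : {a : A | ℓ a = m ∧ ε < lam a} ⊆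
            ⋃ p ∈ Finset.range P, ρ^[p] ⁻¹' {a : A | ℓ a < m ∧ ε < lam a} := by
          rintro a ⟨ha, hεa⟩
          obtain ⟨p, hp1, hp2, hp3⟩ := hrec a (by omega)
          rw [ha] at hp2 hp3
          have hLp : (1:ℝ) ≤ L m ^ p := one_le_pow₀ hLm.le
          have hLppos : (0:ℝ) < L m ^ p := by positivity
          have hmul : ε * L m ^ p < lam (ρ^[p] a) := by
            rw [hp3, lt_div_iff₀ hLppos] at hεa
            exact hεa
          have hb : ε < lam (ρ^[p] a) := by nlinarith
          have hble : lam (ρ^[p] a) ≤ 1 := (hbound _).trans (hprod1 _)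
          have hpP : p < P := by
            by_contra h
            have := hP p (le_of_not_gt h)
            have h1 : (1:ℝ) < ε * L m ^ p := by
              rw [div_lt_iff₀ hε] at this
              nlinarith
            nlinarith
          exact Set.mem_biUnion (Finset.mem_range.mpr hpP) ⟨hp2, hb⟩
        exact (Set.Finite.biUnion (Finset.range P).finite_toSet
          (fun p _ => fto_iter hfto p hT')).subset hsub
  obtain ⟨M, hM⟩ : ∃ M : ℕ, ∀ m ≥ M, ∏ k ∈ Finset.Icc 2 m, (L k)⁻¹ < ε :=
    eventually_atTop.mp (hprod.eventually_lt_const hε)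
  have hfin : (⋃ m ∈ Finset.range M, {a : A | ℓ a = m ∧ ε < lam a}).Finite :=
    Set.Finite.biUnion (Finset.range M).finite_toSet (fun m _ => key m)
  refine hfin.subset (fun a ha => ?_)
  have hℓM : ℓ a < M := by
    by_contra h
    have := (hbound a).trans_lt (hM (ℓ a) (le_of_not_gt h))
    exact absurd (ha.trans this) (lt_irrefl ε)
  exact Set.mem_biUnion (Finset.mem_range.mpr hℓM) ⟨rfl, ha⟩
end
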